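/- First-order critical points with positive semidefinite block products are fixed points: Let α ≥ 0 and G ∈ O(d)^{⊗n}. If G is a first-order critical point of (QP) (i.e. C_iᵀ G = G_i Gᵀ C_i G_i for each i ∈ [n]) and moreover C̃_iᵀ G G_iᵀ is positive semidefinite for each i ∈ [n], then G is a fixed point of T_α, i.e. G ∈ T_α(G). -/

import Mathlib

open Matrix BigOperators

noncomputable section
namespace GroupSync

variable {n d : ℕ}

/-- Frobenius norm of a real matrix. -/
def frob {m k : Type*} [Fintype m] [Fintype k] (X : Matrix m k ℝ) : ℝ :=
  Real.sqrt (∑ i, ∑ j, (X i j) ^ 2)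

/-- Spectral (operator) norm of a real matrix: the operator norm of the induced
linear map between Euclidean spaces. -/
def spec {m k : Type*} [Fintype m] [Fintype k] [DecidableEq k] (X : Matrix m k ℝ) : ℝ :=
  ‖LinearMap.toContinuousLinearMap (Matrix.toEuclideanLin X)‖

/-- Nuclear norm: trace of the positive semidefinite square root of `X * Xᵀ`
(i.e. the sum of the singular values of `X`). -/
def nuclear {m k : Type*} [Fintype m] [Fintype k] [DecidableEq m] (X : Matrix m k ℝ) : ℝ :=
  (((Matrix.posSemidef_self_mul_conjTranspose X).1.eigenvectorUnitary : Matrix m m ℝ) *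
    Matrix.diagonal ((RCLike.ofReal : ℝ → ℝ) ∘ Real.sqrt ∘ (Matrix.posSemidef_self_mul_conjTranspose X).1.eigenvalues) *
    (star (Matrix.posSemidef_self_mul_conjTranspose X).1.eigenvectorUnitary : Matrix m m ℝ)).trace

/-- The positive semidefinite square root of `X * Xᵀ`. -/
def psdSqrtMulT {m k : Type*} [Fintype m] [Fintype k] [DecidableEq m] (X : Matrix m k ℝ) :
    Matrix m m ℝ :=
  ((Matrix.posSemidef_self_mul_conjTranspose X).1.eigenvectorUnitary : Matrix m m ℝ) *
    Matrix.diagonal ((RCLike.ofReal : ℝ → ℝ) ∘ Real.sqrt ∘ (Matrix.posSemidef_self_mul_conjTranspose X).1.eigenvalues) *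
    (star (Matrix.posSemidef_self_mul_conjTranspose X).1.eigenvectorUnitary : Matrix m m ℝ)

/-- Membership in the orthogonal group `O(d)`. -/
def IsOd (g : Matrix (Fin d) (Fin d) ℝ) : Prop :=
  gᵀ * g = 1 ∧ g * gᵀ = 1

/-- Membership in the special orthogonal group `SO(d)`. -/
def IsSOd (g : Matrix (Fin d) (Fin d) ℝ) : Prop :=
  IsOd g ∧ g.det = 1

/-- The `i`-th `d × d` block of an `nd × d` matrix. -/
def blk (X : Matrix (Fin n × Fin d) (Fin d) ℝ) (i : Fin n) : Matrix (Fin d) (Fin d) ℝ :=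
  Matrix.of fun a b => X (i, a) b

/-- Membership in `O(d)^{⊗n}`: every `d × d` block is orthogonal. -/
def OdN (G : Matrix (Fin n × Fin d) (Fin d) ℝ) : Prop :=
  ∀ i : Fin n, IsOd (blk G i)

/-- Membership in `SO(d)^{⊗n}`. -/
def SOdN (G : Matrix (Fin n × Fin d) (Fin d) ℝ) : Prop :=
  ∀ i : Fin n, IsSOd (blk G i)

/-- The `i`-th block column (an `nd × d` matrix) of an `nd × nd` matrix. -/
def bcol (M : Matrix (Fin n × Fin d) (Fin n × Fin d) ℝ) (i : Fin n) :
    Matrix (Fin n × Fin d) (Fin d) ℝ :=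
  Matrix.of fun p b => M p (i, b)

/-- The `ij`-th `d × d` block of an `nd × nd` matrix. -/
def dblk (M : Matrix (Fin n × Fin d) (Fin n × Fin d) ℝ) (i j : Fin n) :
    Matrix (Fin d) (Fin d) ℝ :=
  Matrix.of fun a b => M (i, a) (j, b)

/-- `G' ∈ T_α(G)` (where `Ct = C + α I`): `G' ∈ O(d)^{⊗n}` and each block `G'_i` is a
nearest point of `C̃ᵢᵀ G` in `O(d)` w.r.t. the Frobenius norm. -/
def InT (Ct : Matrix (Fin n × Fin d) (Fin n × Fin d) ℝ)
    (G G' : Matrix (Fin n × Fin d) (Fin d) ℝ) : Prop :=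
  OdN G' ∧ ∀ i : Fin n, ∀ X : Matrix (Fin d) (Fin d) ℝ, IsOd X →
    frob (blk G' i - (bcol Ct i)ᵀ * G) ≤ frob (X - (bcol Ct i)ᵀ * G)

/-- `G' ∈ ST_α(G)`: the `SO(d)` analogue of `InT`. -/
def InST (Ct : Matrix (Fin n × Fin d) (Fin n × Fin d) ℝ)
    (G G' : Matrix (Fin n × Fin d) (Fin d) ℝ) : Prop :=
  SOdN G' ∧ ∀ i : Fin n, ∀ X : Matrix (Fin d) (Fin d) ℝ, IsSOd X →
    frob (blk G' i - (bcol Ct i)ᵀ * G) ≤ frob (X - (bcol Ct i)ᵀ * G)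

/-- The quotient distance `d(X, Y) = min_{g ∈ O(d)} ‖X − Y g‖_F`. -/
def dOrth (X Y : Matrix (Fin n × Fin d) (Fin d) ℝ) : ℝ :=
  ⨅ g : {g : Matrix (Fin d) (Fin d) ℝ // IsOd g}, frob (X - Y * g.1)

/-- The objective function `f(G) = tr(Gᵀ C G)`. -/
def obj (C : Matrix (Fin n × Fin d) (Fin n × Fin d) ℝ)
    (G : Matrix (Fin n × Fin d) (Fin d) ℝ) : ℝ :=
  Matrix.trace (Gᵀ * C * G)

/-- Hadamard (entrywise) product. -/
def had {m k : Type*} (X Y : Matrix m k ℝ) : Matrix m k ℝ :=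
  Matrix.of fun p q => X p q * Y p q

/-- `W ⊗ (1_d 1_dᵀ)`, the Kronecker product of `W` with the all-ones `d × d` matrix. -/
def kron1 (W : Matrix (Fin n) (Fin n) ℝ) : Matrix (Fin n × Fin d) (Fin n × Fin d) ℝ :=
  Matrix.kroneckerMap (· * ·) W (Matrix.of fun (_ _ : Fin d) => (1 : ℝ))

/-- The all-ones matrix `1_m 1_mᵀ`. -/
def onesMat (m : Type*) : Matrix m m ℝ :=
  Matrix.of fun _ _ => (1 : ℝ)

/-- `symblockdiag`: symmetrize the diagonal `d × d` blocks, zero out all other blocks. -/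
def sbd (X : Matrix (Fin n × Fin d) (Fin n × Fin d) ℝ) :
    Matrix (Fin n × Fin d) (Fin n × Fin d) ℝ :=
  Matrix.of fun p q => if p.1 = q.1 then (X p q + X (p.1, q.2) (q.1, p.2)) / 2 else 0

/-- `S(G) = symblockdiag(C G Gᵀ) − C`. -/
def Smat (C : Matrix (Fin n × Fin d) (Fin n × Fin d) ℝ)
    (G : Matrix (Fin n × Fin d) (Fin d) ℝ) : Matrix (Fin n × Fin d) (Fin n × Fin d) ℝ :=
  sbd (C * (G * Gᵀ)) - C

/-- `G` is a second-order critical point of (QP): `S(G) G = 0` and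
`⟨H, S(G) H⟩ ≥ 0` for all tangent directions `H` (blockwise `Hᵢ Gᵢᵀ` skew-symmetric). -/
def IsSOC (C : Matrix (Fin n × Fin d) (Fin n × Fin d) ℝ)
    (G : Matrix (Fin n × Fin d) (Fin d) ℝ) : Prop :=
  Smat C G * G = 0 ∧
  ∀ H : Matrix (Fin n × Fin d) (Fin d) ℝ,
    (∀ i : Fin n, (blk H i * (blk G i)ᵀ)ᵀ = -(blk H i * (blk G i)ᵀ)) →
    0 ≤ Matrix.trace (Hᵀ * (Smat C G * H))

/-- Smallest singular value of a square matrix, as the minimum of `‖M v‖` over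
unit vectors `v`. -/
def sigmaMin (M : Matrix (Fin d) (Fin d) ℝ) : ℝ :=
  ⨅ v : {v : Fin d → ℝ // ∑ a, (v a) ^ 2 = 1}, Real.sqrt (∑ a, (M.mulVec v.1 a) ^ 2)

/-- The singular values of a square matrix: square roots of the eigenvalues of `Mᵀ M`. -/
def singVal (M : Matrix (Fin d) (Fin d) ℝ) (l : Fin d) : ℝ :=
  Real.sqrt ((by simpa only [Matrix.conjTranspose_eq_transpose_of_trivial] using Matrix.isHermitian_conjTranspose_mul_self M : (Mᵀ * M).IsHermitian).eigenvalues l)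

/-- Smallest eigenvalue of a (symmetric) matrix, as the minimum Rayleigh quotient
over unit vectors. -/
def lambdaMin {m : Type*} [Fintype m] (M : Matrix m m ℝ) : ℝ :=
  ⨅ v : {v : m → ℝ // ∑ i, (v i) ^ 2 = 1}, v.1 ⬝ᵥ M.mulVec v.1

/-- `D_α(G)`: block diagonal of the psd square roots of `(C̃ᵢᵀ G)(C̃ᵢᵀ G)ᵀ`, minus `C̃`. -/
def Dmat (Ct : Matrix (Fin n × Fin d) (Fin n × Fin d) ℝ)
    (G : Matrix (Fin n × Fin d) (Fin d) ℝ) : Matrix (Fin n × Fin d) (Fin n × Fin d) ℝ :=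
  (Matrix.of fun p q =>
    if p.1 = q.1 then psdSqrtMulT ((bcol Ct p.1)ᵀ * G) p.2 q.2 else 0) - Ct

/-- The residual function `ρ_α(G) = ‖D_α(G) G‖_F`. -/
def rho (Ct : Matrix (Fin n × Fin d) (Fin n × Fin d) ℝ)
    (G : Matrix (Fin n × Fin d) (Fin d) ℝ) : ℝ :=
  frob (Dmat Ct G * G)

/-- Blockwise infinity norm: `‖X‖_∞ = max_i ‖X_i‖` (spectral norm of the blocks). -/
def binf (X : Matrix (Fin n × Fin d) (Fin d) ℝ) : ℝ :=
  ⨆ i : Fin n, spec (blk X i)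

/-! Write `M = C̃ᵢᵀ G` and `Y = Gᵢ`. If `P = M Yᵀ` is positive semidefinite, then `M = P Y` is a
polar decomposition of `M`. For orthogonal `X` one has `‖X - M‖² = d - 2 tr(Xᵀ M) + ‖M‖²`, and
`tr(Xᵀ M) = tr(P (Y Xᵀ)) ≤ tr P = tr(Yᵀ M)`, because multiplying a positive semidefinite matrix by an
orthogonal one cannot increase its trace. So `Y` is a nearest orthogonal matrix to `M`. -/

open scoped MatrixOrder in
theorem trace_mul_le_trace_of_posSemidef {m : Type*} [Fintype m] [DecidableEq m]
    {P Q : Matrix m m ℝ} (hP : P.PosSemidef) (hQ : Qᵀ * Q = 1) : (P * Q).trace ≤ P.trace := by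
  obtain ⟨B, rfl⟩ := CStarAlgebra.nonneg_iff_eq_star_mul_self.mp hP.nonneg
  rw [star_eq_conjTranspose, conjTranspose_eq_transpose_of_trivial]
  -- `tr(BᵀB) - tr(BᵀBQ)` is half the squared Frobenius norm of `Bᵀ - QBᵀ`.
  have hS : ((Bᵀ - Q * Bᵀ)ᵀ * (Bᵀ - Q * Bᵀ)).trace
      = 2 * ((Bᵀ * B).trace - (Bᵀ * B * Q).trace) := by
    have hQ' : B * Qᵀ * (Q * Bᵀ) = B * Bᵀ := by
      rw [Matrix.mul_assoc, ← Matrix.mul_assoc Qᵀ, hQ, Matrix.one_mul]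
    have hsym : (B * Qᵀ * Bᵀ).trace = (B * Q * Bᵀ).trace := by
      rw [← trace_transpose (B * Q * Bᵀ)]
      simp only [transpose_mul, transpose_transpose, Matrix.mul_assoc]
    simp only [transpose_sub, transpose_mul, transpose_transpose, Matrix.sub_mul, Matrix.mul_sub,
      trace_sub, hQ']
    rw [← Matrix.mul_assoc B Q, hsym, trace_mul_comm B Bᵀ, trace_mul_comm (B * Q) Bᵀ,
      Matrix.mul_assoc Bᵀ]
    ring
  have hnonneg := (posSemidef_conjTranspose_mul_self (Bᵀ - Q * Bᵀ)).trace_nonneg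
  rw [conjTranspose_eq_transpose_of_trivial, hS] at hnonneg
  linarith

theorem frob_eq_sqrt_trace {m k : Type*} [Fintype m] [Fintype k] (X : Matrix m k ℝ) :
    frob X = √(Xᵀ * X).trace := by
  rw [frob, Finset.sum_comm]
  simp [Matrix.trace, Matrix.mul_apply, sq]

theorem trace_transpose_sub_mul_sub {m k : Type*} [Fintype m] [Fintype k] (A M : Matrix m k ℝ) :
    ((A - M)ᵀ * (A - M)).trace = (Aᵀ * A).trace - 2 * (Aᵀ * M).trace + (Mᵀ * M).trace := by
  have h : (Mᵀ * A).trace = (Aᵀ * M).trace := by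
    rw [← trace_transpose, transpose_mul, transpose_transpose]
  simp only [transpose_sub, Matrix.sub_mul, Matrix.mul_sub, trace_sub, h]
  ring

theorem frob_sub_le_frob_sub {m : Type*} [Fintype m] [DecidableEq m] {X Y M : Matrix m m ℝ}
    (hX : Xᵀ * X = 1) (hY : Yᵀ * Y = 1) (h : (Xᵀ * M).trace ≤ (Yᵀ * M).trace) :
    frob (Y - M) ≤ frob (X - M) := by
  rw [frob_eq_sqrt_trace, frob_eq_sqrt_trace]
  refine Real.sqrt_le_sqrt ?_
  rw [trace_transpose_sub_mul_sub, trace_transpose_sub_mul_sub, hX, hY]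
  linarith

theorem frob_sub_le_of_posSemidef_mul_transpose {m : Type*} [Fintype m] [DecidableEq m]
    {X Y M : Matrix m m ℝ} (hY : Yᵀ * Y = 1) (hP : (M * Yᵀ).PosSemidef) (hX : Xᵀ * X = 1) :
    frob (Y - M) ≤ frob (X - M) := by
  have hYY : Y * Yᵀ = 1 := mul_eq_one_comm.mp hY
  have hXX : X * Xᵀ = 1 := mul_eq_one_comm.mp hX
  have hM : M = M * Yᵀ * Y := by rw [Matrix.mul_assoc, hY, Matrix.mul_one]
  refine frob_sub_le_frob_sub hX hY ?_
  have hQ : (Y * Xᵀ)ᵀ * (Y * Xᵀ) = 1 := by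
    rw [transpose_mul, transpose_transpose, Matrix.mul_assoc, ← Matrix.mul_assoc Yᵀ, hY,
      Matrix.one_mul, hXX]
  calc (Xᵀ * M).trace = (M * Yᵀ * (Y * Xᵀ)).trace := by
        rw [trace_mul_comm, ← Matrix.mul_assoc, ← hM]
    _ ≤ (M * Yᵀ).trace := trace_mul_le_trace_of_posSemidef hP hQ
    _ = (Yᵀ * M).trace := trace_mul_comm M Yᵀ

theorem first_order_critical_psd_is_fixed_point_general {n d : ℕ}
    (Ct : Matrix (Fin n × Fin d) (Fin n × Fin d) ℝ)
    (G : Matrix (Fin n × Fin d) (Fin d) ℝ) (hG : OdN G)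
    (hpsd : ∀ i : Fin n, ((bcol Ct i)ᵀ * G * (blk G i)ᵀ).PosSemidef) :
    InT Ct G G :=
  ⟨hG, fun i _ hX => frob_sub_le_of_posSemidef_mul_transpose (hG i).1 (hpsd i) hX.1⟩

/-- first-order critical points with psd block products are fixed points.
For `α ≥ 0`, `C` symmetric and `G ∈ O(d)^{⊗n}` with `C̃ = C + α I`: if `G` is a
first-order critical point of (QP) and `C̃ᵢᵀ G Gᵢᵀ` is positive semidefinite for each
`i`, then `G ∈ T_α(G)`. -/
theorem first_order_critical_psd_is_fixed_point {n d : ℕ}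
    (C : Matrix (Fin n × Fin d) (Fin n × Fin d) ℝ) (hCsymm : Cᵀ = C)
    (α : ℝ) (hα : 0 ≤ α)
    (Ct : Matrix (Fin n × Fin d) (Fin n × Fin d) ℝ)
    (hCt : Ct = C + α • (1 : Matrix (Fin n × Fin d) (Fin n × Fin d) ℝ))
    (G : Matrix (Fin n × Fin d) (Fin d) ℝ) (hG : OdN G)
    (hfoc : ∀ i : Fin n, (bcol C i)ᵀ * G = blk G i * (Gᵀ * bcol C i) * blk G i)
    (hpsd : ∀ i : Fin n, ((bcol Ct i)ᵀ * G * (blk G i)ᵀ).PosSemidef) :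
    InT Ct G G :=
  first_order_critical_psd_is_fixed_point_general Ct G hG hpsd

end GroupSync
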